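/- (Quantum Bézout for cyclotomic parts) Let m, n be positive integers such that m does not divide n and n does not divide m. Then the cyclotomic parts Θ_m and Θ_n generate the unit ideal in ℤ[x]: there exist a, b ∈ ℤ[x] with a·Θ_m + b·Θ_n = 1. -/

import Mathlib

open Polynomial

noncomputable def qnum : ℕ → Polynomial ℤ
  | 0 => 0
  | 1 => 1
  | (n + 2) => X * qnum (n + 1) - qnum n

lemma qnum_zero : qnum 0 = 0 := rfl
lemma qnum_one : qnum 1 = 1 := rfl
lemma qnum_add_two (n : ℕ) : qnum (n + 2) = X * qnum (n + 1) - qnum n := rfl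

lemma qnum_spec : ∀ n : ℕ, (qnum (n + 1)).Monic ∧ (qnum (n + 1)).natDegree = n
  | 0 => ⟨monic_one, natDegree_one⟩
  | 1 => by
    have : qnum 2 = X := by rw [qnum_add_two, qnum_one, qnum_zero]; ring
    rw [this]; exact ⟨monic_X, natDegree_X⟩
  | (n + 2) => by
    obtain ⟨h1, d1⟩ := qnum_spec (n + 1)
    obtain ⟨h0, d0⟩ := qnum_spec n
    have hXm : (X * qnum (n + 2)).Monic := monic_X.mul h1
    have hdX : (X * qnum (n + 2)).natDegree = n + 2 := by
      rw [natDegree_mul X_ne_zero h1.ne_zero, natDegree_X, d1]; omega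
    have hlt : (qnum (n + 1)).natDegree < (X * qnum (n + 2)).natDegree := by
      rw [hdX, d0]; omega
    have hltd : (qnum (n + 1)).degree < (X * qnum (n + 2)).degree :=
      degree_lt_degree hlt
    refine ⟨?_, ?_⟩
    · rw [qnum_add_two]; exact hXm.sub_of_left hltd
    · rw [qnum_add_two, natDegree_sub_eq_left_of_natDegree_lt hlt, hdX]

lemma qnum_monic (n : ℕ) (hn : 0 < n) : (qnum n).Monic := by
  obtain ⟨k, rfl⟩ := Nat.exists_eq_add_of_lt hn; simpa using (qnum_spec k).1

lemma qnum_natDegree (n : ℕ) (hn : 0 < n) : (qnum n).natDegree = n - 1 := by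
  obtain ⟨k, rfl⟩ := Nat.exists_eq_add_of_lt hn; simpa using (qnum_spec k).2

lemma qnum_add : ∀ a b : ℕ, qnum (a + b + 1) = qnum (a + 1) * qnum (b + 1) - qnum a * qnum b
  | a, 0 => by simp [qnum_one, qnum_zero]
  | a, 1 => by
    have h2 : qnum 2 = X := by rw [qnum_add_two, qnum_one, qnum_zero]; ring
    have := qnum_add_two a
    rw [show a + 1 + 1 = a + 2 by ring, h2, qnum_one, this]; ring
  | a, (b + 2) => by
    have ih1 := qnum_add a (b + 1)
    have ih0 := qnum_add a b
    have r1 : qnum (a + (b + 2) + 1) = X * qnum (a + b + 1 + 1) - qnum (a + b + 1) := by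
      rw [show a + (b + 2) + 1 = (a + b + 1) + 2 by ring, qnum_add_two]
    have r2 : qnum (b + 3) = X * qnum (b + 2) - qnum (b + 1) := qnum_add_two (b + 1)
    have r3 : qnum (a + (b + 1) + 1) = qnum (a + b + 1 + 1) := by ring_nf
    rw [r3, show b + 1 + 1 = b + 2 by ring] at ih1
    rw [show b + 2 + 1 = b + 3 by ring, r1, r2]
    linear_combination X * ih1 - ih0 + qnum a * qnum_add_two b

lemma qnum_sq : ∀ k : ℕ, qnum (k + 2) * qnum k = qnum (k + 1) ^ 2 - 1
  | 0 => by simp [qnum_zero, qnum_one]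
  | (k + 1) => by
    have ih := qnum_sq k
    have r2 := qnum_add_two k
    have r3 := qnum_add_two (k + 1)
    rw [show k + 1 + 2 = k + 3 by ring] at r3 ⊢
    rw [r3]
    linear_combination ih - qnum (k + 2) * r2
lemma qnum_sub (r t : ℕ) :
    qnum r = qnum (t + 2) * qnum (r + t + 1) +
      (qnum r * qnum (t + 1) - qnum (r + 1) * qnum (t + 2)) * qnum (t + 1) := by
  linear_combination (-(qnum (t + 2))) * qnum_add r t + qnum r * qnum_sq t

lemma qnum_bezout (m n : ℕ) (hm : 0 < m) (hn : 0 < n) :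
    ∃ a b : Polynomial ℤ, a * qnum m + b * qnum n = qnum (Nat.gcd m n) := by
  rcases lt_trichotomy m n with h | rfl | h
  · obtain ⟨a, b, hab⟩ := qnum_bezout m (n - m) hm (by omega)
    rw [Nat.gcd_sub_self_right (le_of_lt h)] at hab
    obtain ⟨t, ht⟩ : ∃ t, m = t + 1 := ⟨m - 1, by omega⟩
    have key := qnum_sub (n - m) t
    rw [show n - m + t + 1 = n by omega] at key
    refine ⟨a + b * (qnum (n - m) * qnum (t + 1) - qnum (n - m + 1) * qnum (t + 2)),
      b * qnum (t + 2), ?_⟩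
    rw [ht] at hab key ⊢
    linear_combination hab - b * key
  · exact ⟨1, 0, by rw [Nat.gcd_self]; ring⟩
  · obtain ⟨a, b, hab⟩ := qnum_bezout (m - n) n (by omega) hn
    rw [Nat.gcd_sub_self_left (le_of_lt h)] at hab
    obtain ⟨t, ht⟩ : ∃ t, n = t + 1 := ⟨n - 1, by omega⟩
    have key := qnum_sub (m - n) t
    rw [show m - n + t + 1 = m by omega] at key
    refine ⟨a * qnum (t + 2),
      a * (qnum (m - n) * qnum (t + 1) - qnum (m - n + 1) * qnum (t + 2)) + b, ?_⟩
    rw [ht] at hab key ⊢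
    linear_combination hab - a * key
termination_by m + n
decreasing_by all_goals omega
lemma qnum_eval_cos (θ : ℝ) : ∀ n : ℕ,
    Polynomial.eval (2 * Real.cos θ) ((qnum n).map (Int.castRingHom ℝ)) * Real.sin θ
      = Real.sin (n * θ)
  | 0 => by simp [qnum_zero]
  | 1 => by simp [qnum_one]
  | (n + 2) => by
    have ih1 := qnum_eval_cos θ (n + 1)
    have ih0 := qnum_eval_cos θ n
    rw [qnum_add_two]
    simp only [Polynomial.map_sub, Polynomial.map_mul, map_X, eval_sub, eval_mul, eval_X]
    have key : Real.sin (((n : ℝ) + 2) * θ)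
        = 2 * Real.cos θ * Real.sin (((n : ℝ) + 1) * θ) - Real.sin ((n : ℝ) * θ) := by
      rw [show ((n : ℝ) + 2) * θ = (((n : ℝ) + 1) * θ) + θ by ring,
          show (n : ℝ) * θ = (((n : ℝ) + 1) * θ) - θ by ring,
          Real.sin_add, Real.sin_sub]
      ring
    push_cast at ih1 ih0 ⊢
    rw [key]
    linear_combination 2 * Real.cos θ * ih1 - ih0

lemma qnum_map_real (m : ℕ) (hm : 0 < m) :
    (qnum m).map (Int.castRingHom ℝ)
      = ∏ k ∈ Finset.Ico 1 m, (X - C (2 * Real.cos (k * Real.pi / m))) := by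
  rcases eq_or_lt_of_le (show 1 ≤ m from hm) with h1 | h2
  · rw [← h1]; simp [qnum_one]
  set f : ℕ → ℝ := fun k => 2 * Real.cos (k * Real.pi / m) with hf
  set P := (qnum m).map (Int.castRingHom ℝ) with hPdef
  set Q := ∏ k ∈ Finset.Ico 1 m, (X - C (f k)) with hQdef
  have hPm : P.Monic := (qnum_monic m hm).map _
  have hPd : P.natDegree = m - 1 := by
    rw [hPdef, natDegree_map_eq_of_injective
      (by exact Int.cast_injective : Function.Injective (Int.castRingHom ℝ)),
      qnum_natDegree m hm]
  have hQm : Q.Monic := monic_prod_of_monic _ _ fun k _ => monic_X_sub_C _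
  have hQd : Q.natDegree = m - 1 := by
    rw [hQdef, natDegree_prod_of_monic _ _ fun k _ => monic_X_sub_C _]
    simp [natDegree_X_sub_C]
  -- angles and injectivity
  have hθmem : ∀ k ∈ Finset.Ico 1 m, (k : ℝ) * Real.pi / m ∈ Set.Icc (0:ℝ) Real.pi := by
    intro k hk
    rw [Finset.mem_Ico] at hk
    constructor
    · positivity
    · rw [div_le_iff₀ (by exact_mod_cast hm)]
      have : (k : ℝ) ≤ m := by exact_mod_cast le_of_lt hk.2
      nlinarith [Real.pi_pos]
  have hinj : Set.InjOn f (Finset.Ico 1 m) := by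
    intro k hk l hl hkl
    simp only [Finset.coe_Ico, Set.mem_Ico] at hk hl
    have hk' : (k : ℝ) * Real.pi / m ∈ Set.Icc (0:ℝ) Real.pi :=
      hθmem k (Finset.mem_Ico.mpr hk)
    have hl' : (l : ℝ) * Real.pi / m ∈ Set.Icc (0:ℝ) Real.pi :=
      hθmem l (Finset.mem_Ico.mpr hl)
    have hcos : Real.cos ((k : ℝ) * Real.pi / m) = Real.cos ((l : ℝ) * Real.pi / m) := by
      have := hkl
      simp only [hf] at this
      linarith
    have heq := Real.injOn_cos hk' hl' hcos
    have hm0 : (m : ℝ) ≠ 0 := by exact_mod_cast hm.ne'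
    field_simp at heq
    exact_mod_cast heq
  set s : Finset ℝ := (Finset.Ico 1 m).image f with hs
  have hcard : s.card = m - 1 := by
    rw [hs, Finset.card_image_of_injOn hinj, Nat.card_Ico]
  -- evaluations vanish
  have hPeval : ∀ v ∈ s, P.eval v = 0 := by
    intro v hv
    rw [hs, Finset.mem_image] at hv
    obtain ⟨k, hk, rfl⟩ := hv
    rw [Finset.mem_Ico] at hk
    set θ := (k : ℝ) * Real.pi / m with hθ
    have hsin : Real.sin θ ≠ 0 := by
      apply ne_of_gt
      apply Real.sin_pos_of_pos_of_lt_pi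
      · have : (0:ℝ) < k := by exact_mod_cast hk.1
        positivity
      · rw [hθ, div_lt_iff₀ (by exact_mod_cast hm)]
        have : (k : ℝ) < m := by exact_mod_cast hk.2
        nlinarith [Real.pi_pos]
    have := qnum_eval_cos θ m
    have hmθ : (m : ℝ) * θ = k * Real.pi := by
      rw [hθ]
      field_simp
    rw [hmθ, Real.sin_nat_mul_pi] at this
    have : P.eval (2 * Real.cos θ) = 0 := by
      rcases mul_eq_zero.mp this with h | h
      · exact h
      · exact absurd h hsin
    exact this
  have hQeval : ∀ v ∈ s, Q.eval v = 0 := by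
    intro v hv
    rw [hs, Finset.mem_image] at hv
    obtain ⟨k, hk, rfl⟩ := hv
    rw [hQdef, eval_prod]
    apply Finset.prod_eq_zero hk
    simp
  -- difference is zero
  have hdlt : (P - Q).natDegree < s.card := by
    rw [hcard]
    by_cases hPQ : P - Q = 0
    · rw [hPQ, natDegree_zero]; omega
    · have hdegPQ : P.degree = Q.degree := by
        rw [degree_eq_natDegree hPm.ne_zero, degree_eq_natDegree hQm.ne_zero, hPd, hQd]
      have hdeg : (P - Q).degree < P.degree :=
        degree_sub_lt hdegPQ hPm.ne_zero (by rw [hPm.leadingCoeff, hQm.leadingCoeff])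
      rw [natDegree_lt_iff_degree_lt hPQ]
      calc (P - Q).degree < P.degree := hdeg
        _ = ((m - 1 : ℕ) : WithBot ℕ) := by rw [degree_eq_natDegree hPm.ne_zero, hPd]
  have := eq_zero_of_natDegree_lt_card_of_eval_eq_zero' (P - Q) s
    (fun v hv => by rw [eval_sub, hPeval v hv, hQeval v hv, sub_zero]) hdlt
  have := sub_eq_zero.mp this
  exact this
noncomputable def thetaR (n : ℕ) : Polynomial ℝ :=
  ∏ k ∈ (Finset.Ico 1 n).filter (fun k => Nat.Coprime k n),
    (X - C (2 * Real.cos (k * Real.pi / n)))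
lemma prod_thetaR (m : ℕ) (hm : 0 < m) :
    ∏ d ∈ m.divisors, thetaR d
      = ∏ k ∈ Finset.Ico 1 m, (X - C (2 * Real.cos (k * Real.pi / m))) := by
  rw [← Finset.prod_fiberwise_of_maps_to
    (g := fun k => m / Nat.gcd k m) (t := m.divisors)
    (fun k _ => Nat.mem_divisors.mpr ⟨Nat.div_dvd_of_dvd (Nat.gcd_dvd_right k m), hm.ne'⟩)
    (fun k => X - C (2 * Real.cos (k * Real.pi / m)))]
  apply Finset.prod_congr rfl
  intro d hd
  obtain ⟨hdvd, -⟩ := Nat.mem_divisors.mp hd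
  have hd0 : 0 < d := Nat.pos_of_mem_divisors hd
  set c := m / d with hcdef
  have hcd : c * d = m := Nat.div_mul_cancel hdvd
  have hdc : d * c = m := by rw [mul_comm]; exact hcd
  have hc0 : 0 < c := by
    rcases Nat.eq_zero_or_pos c with h | h
    · rw [h, zero_mul] at hcd; omega
    · exact h
  have hfiber : ∀ k ∈ (Finset.Ico 1 m).filter (fun k => m / Nat.gcd k m = d),
      Nat.gcd k m = c := by
    intro k hk
    rw [Finset.mem_filter] at hk
    have hgdvd : Nat.gcd k m ∣ m := Nat.gcd_dvd_right k m
    have h2 := Nat.div_div_self hgdvd hm.ne'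
    rw [hk.2] at h2
    rw [← h2]
  unfold thetaR
  refine Finset.prod_nbij' (fun j => j * c) (fun k => k / c) ?_ ?_ ?_ ?_ ?_
  · intro j hj
    rw [Finset.mem_filter, Finset.mem_Ico] at hj
    obtain ⟨⟨hj1, hjd⟩, hjco⟩ := hj
    have hgcd : Nat.gcd (j * c) m = c := by
      rw [← hdc, Nat.gcd_mul_right, hjco, one_mul]
    rw [Finset.mem_filter, Finset.mem_Ico]
    refine ⟨⟨Nat.one_le_iff_ne_zero.mpr (Nat.mul_ne_zero (by omega) hc0.ne'), ?_⟩, ?_⟩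
    · calc j * c < d * c := by
            exact Nat.mul_lt_mul_of_lt_of_le hjd (le_refl c) hc0
        _ = m := hdc
    · rw [hgcd, ← hcd, Nat.mul_div_cancel_left d hc0]
  · intro k hk
    have hgc := hfiber k hk
    rw [Finset.mem_filter, Finset.mem_Ico] at hk
    obtain ⟨⟨hk1, hkm⟩, -⟩ := hk
    have hcdvdk : c ∣ k := hgc ▸ Nat.gcd_dvd_left k m
    obtain ⟨j, rfl⟩ := hcdvdk
    show c * j / c ∈ _
    rw [Nat.mul_div_cancel_left j hc0]
    rw [Finset.mem_filter, Finset.mem_Ico]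
    have hj1 : 1 ≤ j := by
      rcases Nat.eq_zero_or_pos j with h | h
      · subst h; omega
      · exact h
    have hjd : j < d := by
      have h3 : c * j < c * d := by rw [hcd]; exact hkm
      exact lt_of_mul_lt_mul_left h3 (Nat.zero_le c)
    refine ⟨⟨hj1, hjd⟩, ?_⟩
    have h4 : Nat.gcd (j * c) (d * c) = Nat.gcd j d * c := Nat.gcd_mul_right j c d
    rw [hdc, mul_comm j c, hgc] at h4
    have h5 : Nat.gcd j d * c = 1 * c := by rw [one_mul, ← h4]
    exact Nat.eq_of_mul_eq_mul_right hc0 h5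
  · intro j _
    exact Nat.mul_div_cancel j hc0
  · intro k hk
    have hgc := hfiber k hk
    have hcdvdk : c ∣ k := hgc ▸ Nat.gcd_dvd_left k m
    exact Nat.div_mul_cancel hcdvdk
  · intro j hj
    rw [Finset.mem_filter, Finset.mem_Ico] at hj
    have hangle : ((j * c : ℕ) : ℝ) * Real.pi / (m : ℝ) = (j : ℝ) * Real.pi / (d : ℝ) := by
      have hm' : (m : ℝ) = (c : ℝ) * (d : ℝ) := by exact_mod_cast hcd.symm
      have hc' : (c : ℝ) ≠ 0 := by exact_mod_cast hc0.ne'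
      have hd' : (d : ℝ) ≠ 0 := by exact_mod_cast hd0.ne'
      push_cast
      rw [hm']
      field_simp
    rw [hangle]
lemma qnum_eq_prod_theta (Θ : ℕ → Polynomial ℤ)
    (hΘ : ∀ m, 0 < m → (Θ m).map (Int.castRingHom ℝ) = thetaR m)
    (m : ℕ) (hm : 0 < m) : qnum m = ∏ d ∈ m.divisors, Θ d := by
  apply Polynomial.map_injective (Int.castRingHom ℝ) (by exact Int.cast_injective)
  rw [Polynomial.map_prod, qnum_map_real m hm, ← prod_thetaR m hm]
  exact Finset.prod_congr rfl fun d hd => (hΘ d (Nat.pos_of_mem_divisors hd)).symm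

theorem cyclotomic_parts_bezout (Θ : ℕ → Polynomial ℤ)
    (hΘ : ∀ m, 0 < m → (Θ m).map (Int.castRingHom ℝ) = thetaR m)
    (m n : ℕ) (hm : 0 < m) (hn : 0 < n) (hmn : ¬ m ∣ n) (hnm : ¬ n ∣ m) :
    ∃ a b : Polynomial ℤ, a * Θ m + b * Θ n = 1 := by
  set g := Nat.gcd m n with hg
  have hg0 : 0 < g := Nat.gcd_pos_of_pos_left n hm
  have hgm : g ∣ m := Nat.gcd_dvd_left m n
  have hgn : g ∣ n := Nat.gcd_dvd_right m n
  obtain ⟨a, b, hab⟩ := qnum_bezout m n hm hn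
  rw [← hg] at hab
  have hprodm := qnum_eq_prod_theta Θ hΘ m hm
  have hprodn := qnum_eq_prod_theta Θ hΘ n hn
  have hprodg := qnum_eq_prod_theta Θ hΘ g hg0
  have hsubm : g.divisors ⊆ m.divisors := Nat.divisors_subset_of_dvd hm.ne' hgm
  have hsubn : g.divisors ⊆ n.divisors := Nat.divisors_subset_of_dvd hn.ne' hgn
  set Pm := ∏ d ∈ m.divisors \ g.divisors, Θ d with hPmdef
  set Pn := ∏ d ∈ n.divisors \ g.divisors, Θ d with hPndef
  have hm' : qnum m = qnum g * Pm := by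
    rw [hprodm, ← Finset.prod_sdiff hsubm, ← hprodg]; ring
  have hn' : qnum n = qnum g * Pn := by
    rw [hprodn, ← Finset.prod_sdiff hsubn, ← hprodg]; ring
  have hgne : qnum g ≠ 0 := (qnum_monic g hg0).ne_zero
  have key : a * Pm + b * Pn = 1 := by
    apply mul_left_cancel₀ hgne
    rw [mul_one]
    calc qnum g * (a * Pm + b * Pn) = a * (qnum g * Pm) + b * (qnum g * Pn) := by ring
      _ = a * qnum m + b * qnum n := by rw [← hm', ← hn']
      _ = qnum g := hab
  have hdvdm : Θ m ∣ Pm := Finset.dvd_prod_of_mem Θ (by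
    rw [Finset.mem_sdiff]
    refine ⟨Nat.mem_divisors_self m hm.ne', fun hc => ?_⟩
    exact hmn ((Nat.mem_divisors.mp hc).1.trans hgn))
  have hdvdn : Θ n ∣ Pn := Finset.dvd_prod_of_mem Θ (by
    rw [Finset.mem_sdiff]
    refine ⟨Nat.mem_divisors_self n hn.ne', fun hc => ?_⟩
    exact hnm ((Nat.mem_divisors.mp hc).1.trans hgm))
  obtain ⟨u, hu⟩ := hdvdm
  obtain ⟨v, hv⟩ := hdvdn
  refine ⟨a * u, b * v, ?_⟩
  rw [hu, hv] at key
  linear_combination key
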